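/- Let 𝒢 be a finite connected properly 4-edge-colored 4-regular bipartite multigraph, fix distinct colors ℓ ≠ ℓ', let B_ℓ and B_{ℓ'} be the sets of ℓ-bubbles and ℓ'-bubbles, and for b ∈ B_ℓ let |V_b(ℓ')| be the number of connected components of the subgraph of b colored by the two colors different from ℓ and ℓ'. Then |B_{ℓ'}| + |B_ℓ| - Σ_{b ∈ B_ℓ} |V_b(ℓ')| ≤ 1. -/

import Mathlib

/-!
Contract every `ℓ'`-bubble and every `ℓ`-bubble to a point, and join an `ℓ'`-bubble to an
`ℓ`-bubble whenever they share a vertex. Every edge of `𝒢` avoids `ℓ` or `ℓ'`, so this bipartite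
graph is connected, and a spanning tree bounds its vertex count `|B_{ℓ'}| + |B_ℓ|` by its edge
count plus one. An edge is witnessed by a vertex whose bicolored component already determines
both bubbles, so there are at most as many edges as bicolored components, and that number is
`Σ_b |V_b(ℓ')|` because each bicolored component lies in exactly one `ℓ`-bubble.
-/

/-- The subgraph of a colored (multi)graph keeping only edges whose color lies in `S`. -/
def colorSubgraph {V E : Type} (src tgt : E → V) (c : E → Fin 4) (S : Set (Fin 4)) :
    SimpleGraph V :=
  SimpleGraph.fromRel (fun u v => ∃ e : E, c e ∈ S ∧ u = src e ∧ v = tgt e)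

lemma colorSubgraph_mono {V E : Type} (src tgt : E → V) (c : E → Fin 4) {S T : Set (Fin 4)}
    (hST : S ⊆ T) : colorSubgraph src tgt c S ≤ colorSubgraph src tgt c T := by
  intro u v h
  simp only [colorSubgraph, SimpleGraph.fromRel_adj] at h ⊢
  obtain ⟨huv, ⟨e, he, rfl, rfl⟩ | ⟨e, he, rfl, rfl⟩⟩ := h
  · exact ⟨huv, .inl ⟨e, hST he, rfl, rfl⟩⟩
  · exact ⟨huv, .inr ⟨e, hST he, rfl, rfl⟩⟩

lemma colorSubgraph_union {V E : Type} (src tgt : E → V) (c : E → Fin 4) (S T : Set (Fin 4)) :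
    colorSubgraph src tgt c (S ∪ T) =
      colorSubgraph src tgt c S ⊔ colorSubgraph src tgt c T := by
  ext u v
  simp only [colorSubgraph, SimpleGraph.sup_adj, SimpleGraph.fromRel_adj, Set.mem_union]
  grind

namespace SimpleGraph

variable {V : Type*}

/-- The paper's `(ℓ, ℓ')`-connectivity graph when `G₁`, `G₂` are the `ℓ'`- and `ℓ`-bubble graphs. -/
def componentIncidenceGraph (G₁ G₂ : SimpleGraph V) :
    SimpleGraph (G₁.ConnectedComponent ⊕ G₂.ConnectedComponent) :=
  fromRel fun x y =>
    ∃ v, x = .inl (G₁.connectedComponentMk v) ∧ y = .inr (G₂.connectedComponentMk v)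

variable {G G₁ G₂ K : SimpleGraph V}

namespace componentIncidenceGraph

lemma adj_mk (v : V) :
    (componentIncidenceGraph G₁ G₂).Adj
      (.inl (G₁.connectedComponentMk v)) (.inr (G₂.connectedComponentMk v)) := by
  rw [componentIncidenceGraph, fromRel_adj]
  exact ⟨Sum.inl_ne_inr, .inl ⟨v, rfl, rfl⟩⟩

lemma reachable_of_sup_adj {u v : V} (h : (G₁ ⊔ G₂).Adj u v) :
    (componentIncidenceGraph G₁ G₂).Reachable
      (.inl (G₁.connectedComponentMk u)) (.inl (G₁.connectedComponentMk v)) := by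
  rcases h with h | h
  · rw [ConnectedComponent.sound h.reachable]
  · have hu := (adj_mk (G₁ := G₁) (G₂ := G₂) u).reachable
    rw [ConnectedComponent.sound h.reachable] at hu
    exact hu.trans (adj_mk v).reachable.symm

lemma reachable_of_sup_reachable {u v : V} (h : (G₁ ⊔ G₂).Reachable u v) :
    (componentIncidenceGraph G₁ G₂).Reachable
      (.inl (G₁.connectedComponentMk u)) (.inl (G₁.connectedComponentMk v)) := by
  obtain ⟨p⟩ := h
  induction p with
  | nil => rfl
  | cons hadj _ ih => exact (reachable_of_sup_adj hadj).trans ih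

lemma connected (h : (G₁ ⊔ G₂).Connected) : (componentIncidenceGraph G₁ G₂).Connected := by
  have hV : Nonempty V := h.nonempty
  have hrep : ∀ x, ∃ v : V,
      (componentIncidenceGraph G₁ G₂).Reachable x (.inl (G₁.connectedComponentMk v)) := by
    rintro (a | b)
    · obtain ⟨v, rfl⟩ := a.exists_rep
      exact ⟨v, .rfl⟩
    · obtain ⟨v, rfl⟩ := b.exists_rep
      exact ⟨v, (adj_mk v).reachable.symm⟩
  refine (connected_iff _).mpr ⟨fun x y => ?_, ⟨.inl (G₁.connectedComponentMk hV.some)⟩⟩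
  obtain ⟨u, hu⟩ := hrep x
  obtain ⟨v, hv⟩ := hrep y
  exact (hu.trans (reachable_of_sup_reachable (h.preconnected u v))).trans hv.symm

lemma card_edgeSet_le [Finite V] (h₁ : K ≤ G₁) (h₂ : K ≤ G₂) :
    Nat.card (componentIncidenceGraph G₁ G₂).edgeSet ≤ Nat.card K.ConnectedComponent := by
  let edgeOf : K.ConnectedComponent → (componentIncidenceGraph G₁ G₂).edgeSet :=
    fun κ => ⟨s(.inl (κ.map (Hom.ofLE h₁)), .inr (κ.map (Hom.ofLE h₂))), by
      obtain ⟨v, rfl⟩ := κ.exists_rep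
      exact adj_mk v⟩
  refine Nat.card_le_card_of_surjective edgeOf ?_
  rintro ⟨e, he⟩
  induction e with
  | _ x y =>
    rw [mem_edgeSet, componentIncidenceGraph, fromRel_adj] at he
    obtain ⟨-, ⟨v, rfl, rfl⟩ | ⟨v, rfl, rfl⟩⟩ := he
    · exact ⟨K.connectedComponentMk v, rfl⟩
    · exact ⟨K.connectedComponentMk v, Subtype.ext Sym2.eq_swap⟩

end componentIncidenceGraph

open componentIncidenceGraph in
theorem card_connectedComponent_add_card_le [Finite V] (h₁ : K ≤ G₁) (h₂ : K ≤ G₂)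
    (h : (G₁ ⊔ G₂).Connected) :
    Nat.card G₁.ConnectedComponent + Nat.card G₂.ConnectedComponent
      ≤ Nat.card K.ConnectedComponent + 1 := by
  rw [← Nat.card_sum]
  exact (connected h).card_vert_le_card_edgeSet_add_one.trans
    (Nat.add_le_add_right (card_edgeSet_le h₁ h₂) 1)

theorem finsum_card_connectedComponent_fiber [Finite V] (hK : K ≤ G) :
    ∑ᶠ b : G.ConnectedComponent, Nat.card {κ : K.ConnectedComponent //
        ∃ v, K.connectedComponentMk v = κ ∧ G.connectedComponentMk v = b}
      = Nat.card K.ConnectedComponent := by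
  have := Fintype.ofFinite G.ConnectedComponent
  have hfiber (b : G.ConnectedComponent) :
      {κ : K.ConnectedComponent //
        ∃ v, K.connectedComponentMk v = κ ∧ G.connectedComponentMk v = b}
        ≃ {κ : K.ConnectedComponent // κ.map (Hom.ofLE hK) = b} :=
    Equiv.subtypeEquivRight fun κ => by
      obtain ⟨v, rfl⟩ := κ.exists_rep
      constructor
      · rintro ⟨w, hw, rfl⟩
        rw [← hw]
        rfl
      · exact fun hb => ⟨v, rfl, hb⟩
  rw [finsum_eq_sum_of_fintype, ← Nat.card_sigma]
  exact Nat.card_congr ((Equiv.sigmaCongrRight hfiber).trans (Equiv.sigmaFiberEquiv _))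

end SimpleGraph

theorem stmt5_general (V E : Type) [Fintype V]
    (src tgt : E → V) (c : E → Fin 4)
    (ℓ ℓ' : Fin 4) (hne : ℓ ≠ ℓ')
    (hconn : (colorSubgraph src tgt c Set.univ).Connected) :
    (Nat.card (colorSubgraph src tgt c {k | k ≠ ℓ'}).ConnectedComponent : ℤ)
      + Nat.card (colorSubgraph src tgt c {k | k ≠ ℓ}).ConnectedComponent
      - ∑ᶠ b : (colorSubgraph src tgt c {k | k ≠ ℓ}).ConnectedComponent,
          (Nat.card {c2 : (colorSubgraph src tgt c {k | k ≠ ℓ ∧ k ≠ ℓ'}).ConnectedComponent //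
            ∃ v : V,
              (colorSubgraph src tgt c {k | k ≠ ℓ ∧ k ≠ ℓ'}).connectedComponentMk v = c2 ∧
              (colorSubgraph src tgt c {k | k ≠ ℓ}).connectedComponentMk v = b} : ℤ)
      ≤ 1 := by
  have hKℓ : colorSubgraph src tgt c {k | k ≠ ℓ ∧ k ≠ ℓ'} ≤
      colorSubgraph src tgt c {k | k ≠ ℓ} := colorSubgraph_mono src tgt c fun _ hk => hk.1
  have hKℓ' : colorSubgraph src tgt c {k | k ≠ ℓ ∧ k ≠ ℓ'} ≤
      colorSubgraph src tgt c {k | k ≠ ℓ'} := colorSubgraph_mono src tgt c fun _ hk => hk.2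
  have hsup : (colorSubgraph src tgt c {k | k ≠ ℓ'} ⊔
      colorSubgraph src tgt c {k | k ≠ ℓ}).Connected := by
    refine hconn.mono ?_
    rw [← colorSubgraph_union]
    exact colorSubgraph_mono src tgt c fun k _ => by
      by_cases hk : k = ℓ
      · exact .inl (hk ▸ hne)
      · exact .inr hk
  have hbound := SimpleGraph.card_connectedComponent_add_card_le hKℓ' hKℓ hsup
  rw [← Nat.cast_finsum, SimpleGraph.finsum_card_connectedComponent_fiber hKℓ]
  omega

/-- For a finite connected properly 4-edge-colored 4-regular bipartite multigraph 𝒢 and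
    distinct colors ℓ ≠ ℓ': |B_{ℓ'}| + |B_ℓ| - Σ_{b ∈ B_ℓ} |V_b(ℓ')| ≤ 1, where
    B_ℓ are the connected components avoiding color ℓ (the ℓ-bubbles) and V_b(ℓ') is
    the set of connected components of the bicolored subgraph avoiding both ℓ and ℓ'
    that lie inside b. -/
theorem stmt5 (V E : Type) [Fintype V] [Fintype E]
    (src tgt : E → V) (c : E → Fin 4) (ε : V → Bool)
    (hbip : ∀ e : E, ε (src e) ≠ ε (tgt e))
    (hreg : ∀ (v : V) (k : Fin 4), ∃! e : E, c e = k ∧ (src e = v ∨ tgt e = v))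
    (ℓ ℓ' : Fin 4) (hne : ℓ ≠ ℓ')
    (hconn : (colorSubgraph src tgt c Set.univ).Connected) :
    (Nat.card (colorSubgraph src tgt c {k | k ≠ ℓ'}).ConnectedComponent : ℤ)
      + Nat.card (colorSubgraph src tgt c {k | k ≠ ℓ}).ConnectedComponent
      - ∑ᶠ b : (colorSubgraph src tgt c {k | k ≠ ℓ}).ConnectedComponent,
          (Nat.card {c2 : (colorSubgraph src tgt c {k | k ≠ ℓ ∧ k ≠ ℓ'}).ConnectedComponent //
            ∃ v : V,
              (colorSubgraph src tgt c {k | k ≠ ℓ ∧ k ≠ ℓ'}).connectedComponentMk v = c2 ∧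
              (colorSubgraph src tgt c {k | k ≠ ℓ}).connectedComponentMk v = b} : ℤ)
      ≤ 1 :=
  stmt5_general V E src tgt c ℓ ℓ' hne hconn
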